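/- arXiv:1811.01840 — 4 statements merged into one kernel-verified Lean document; each statement's English description precedes it below -/
import Mathlib

section
/- ∫_{-∞}^{∞} (1 - e^{-z²} - z² e^{-z²})/z⁴ dz = (2/3)√π. -/
/-!
Write the numerator as `g (z²)` with `g a = 1 - (1 + a) e^{-a}`, so that `0 ≤ g a ≤ min 1 a²`.
Two integrations by parts give the explicit primitive
`F z = (2/3) ∫₀^z e^{-u²} du - g (z²) / (3 z³)` of the integrand on `z ≠ 0`.
The bounds on `g` show `F 0⁺ = 0` and `F (+∞) = (2/3)(√π / 2)`; since the integrand is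
nonnegative it is then automatically integrable on `(0, ∞)` with integral `√π / 3`, and evenness
doubles it.
-/

open Real MeasureTheory Set Filter Topology

namespace Real

lemma one_sub_one_add_mul_exp_neg_nonneg (a : ℝ) : 0 ≤ 1 - (1 + a) * exp (-a) := by
  have h := mul_le_mul_of_nonneg_right (add_one_le_exp a) (exp_pos (-a)).le
  rw [← exp_add, add_neg_cancel, exp_zero] at h
  linarith

lemma one_sub_one_add_mul_exp_neg_le_one {a : ℝ} (ha : -1 ≤ a) :
    1 - (1 + a) * exp (-a) ≤ 1 := by
  nlinarith [exp_pos (-a)]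

lemma one_sub_one_add_mul_exp_neg_le_sq {a : ℝ} (ha : -1 ≤ a) :
    1 - (1 + a) * exp (-a) ≤ a ^ 2 := by
  nlinarith [add_one_le_exp (-a)]

end Real

noncomputable def quarticPrimitive (z : ℝ) : ℝ :=
  (2 / 3) * (∫ u in (0 : ℝ)..z, exp (-u ^ 2)) - (1 - (1 + z ^ 2) * exp (-z ^ 2)) / (3 * z ^ 3)

@[simp]
lemma quarticPrimitive_zero : quarticPrimitive 0 = 0 := by
  simp [quarticPrimitive]

lemma hasDerivAt_integral_exp_neg_sq (x : ℝ) :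
    HasDerivAt (fun z : ℝ => ∫ u in (0 : ℝ)..z, exp (-u ^ 2)) (exp (-x ^ 2)) x := by
  have hcont : Continuous fun u : ℝ => exp (-u ^ 2) := by fun_prop
  exact intervalIntegral.integral_hasDerivAt_right (hcont.intervalIntegrable _ _)
    (hcont.stronglyMeasurableAtFilter _ _) hcont.continuousAt

lemma hasDerivAt_one_sub_one_add_sq_mul_exp_neg_sq (x : ℝ) :
    HasDerivAt (fun z : ℝ => 1 - (1 + z ^ 2) * exp (-z ^ 2)) (2 * x ^ 3 * exp (-x ^ 2)) x := by
  have hexp : HasDerivAt (fun z : ℝ => exp (-z ^ 2)) (exp (-x ^ 2) * -(2 * x)) x := by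
    simpa using ((hasDerivAt_pow 2 x).neg).exp
  have hpoly : HasDerivAt (fun z : ℝ => 1 + z ^ 2) (2 * x) x := by
    simpa using (hasDerivAt_pow 2 x).const_add 1
  refine ((hpoly.mul hexp).const_sub 1).congr_deriv ?_
  ring

lemma hasDerivAt_quarticPrimitive {x : ℝ} (hx : x ≠ 0) :
    HasDerivAt quarticPrimitive ((1 - exp (-x ^ 2) - x ^ 2 * exp (-x ^ 2)) / x ^ 4) x := by
  have hden : HasDerivAt (fun z : ℝ => 3 * z ^ 3) (3 * (3 * x ^ 2)) x := by
    simpa using (hasDerivAt_pow 3 x).const_mul 3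
  have hquot := (hasDerivAt_one_sub_one_add_sq_mul_exp_neg_sq x).div hden (by positivity)
  refine (((hasDerivAt_integral_exp_neg_sq x).const_mul (2 / 3)).sub hquot).congr_deriv ?_
  field_simp
  ring

lemma continuousWithinAt_quarticPrimitive_zero :
    ContinuousWithinAt quarticPrimitive (Ici 0) 0 := by
  have hint : Tendsto (fun z : ℝ => (2 / 3) * ∫ u in (0 : ℝ)..z, exp (-u ^ 2))
      (𝓝[Ici 0] 0) (𝓝 0) := by
    simpa [ContinuousWithinAt] using
      ((hasDerivAt_integral_exp_neg_sq 0).continuousAt.const_mul (2 / 3 : ℝ)).continuousWithinAt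
        (s := Ici 0)
  -- `g (z²) / (3 z³) ≤ z⁴ / (3 z³) = z / 3`
  have hquot : Tendsto (fun z : ℝ => (1 - (1 + z ^ 2) * exp (-z ^ 2)) / (3 * z ^ 3))
      (𝓝[Ici 0] 0) (𝓝 0) := by
    refine squeeze_zero' ?_ ?_ (g := fun z : ℝ => z / 3) ?_
    · filter_upwards [self_mem_nhdsWithin] with x (hx : 0 ≤ x)
      exact div_nonneg (one_sub_one_add_mul_exp_neg_nonneg _) (by positivity)
    · filter_upwards [self_mem_nhdsWithin] with x (hx : 0 ≤ x)
      rcases hx.eq_or_lt with rfl | hx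
      · simp
      · rw [div_le_iff₀ (by positivity)]
        nlinarith [one_sub_one_add_mul_exp_neg_le_sq (a := x ^ 2) (by nlinarith)]
    · exact tendsto_nhdsWithin_of_tendsto_nhds
        ((continuous_id.div_const (3 : ℝ)).tendsto' 0 0 (zero_div 3))
  have h := hint.sub hquot
  rw [sub_zero] at h
  rw [ContinuousWithinAt, quarticPrimitive_zero]
  exact h

lemma tendsto_quarticPrimitive_atTop : Tendsto quarticPrimitive atTop (𝓝 (√π / 3)) := by
  have hint : Tendsto (fun z : ℝ => ∫ u in (0 : ℝ)..z, exp (-u ^ 2)) atTop (𝓝 (√π / 2)) := by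
    have h := intervalIntegral_tendsto_integral_Ioi 0
      (integrable_exp_neg_mul_sq (b := 1) one_pos).integrableOn tendsto_id
    rw [integral_gaussian_Ioi] at h
    simpa using h
  have hquot : Tendsto (fun z : ℝ => (1 - (1 + z ^ 2) * exp (-z ^ 2)) / (3 * z ^ 3))
      atTop (𝓝 0) := by
    refine squeeze_zero' ?_ ?_ (g := fun z : ℝ => (3 * z ^ 3)⁻¹) ?_
    · filter_upwards [Ioi_mem_atTop 0] with x (hx : 0 < x)
      exact div_nonneg (one_sub_one_add_mul_exp_neg_nonneg _) (by positivity)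
    · filter_upwards [Ioi_mem_atTop 0] with x (hx : 0 < x)
      rw [div_eq_mul_inv]
      exact mul_le_of_le_one_left (by positivity)
        (one_sub_one_add_mul_exp_neg_le_one (by nlinarith))
    · exact ((tendsto_pow_atTop three_ne_zero).const_mul_atTop three_pos).inv_tendsto_atTop
  have h := (hint.const_mul (2 / 3)).sub hquot
  rwa [show 2 / 3 * (√π / 2) - 0 = √π / 3 by ring] at h

lemma integral_Ioi_one_sub_exp_sub_sq_exp_div_quartic :
    ∫ z in Ioi (0 : ℝ), (1 - exp (-z ^ 2) - z ^ 2 * exp (-z ^ 2)) / z ^ 4 = √π / 3 := by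
  have hnonneg (z : ℝ) : 0 ≤ (1 - exp (-z ^ 2) - z ^ 2 * exp (-z ^ 2)) / z ^ 4 := by
    refine div_nonneg ?_ (by positivity)
    linarith [one_sub_one_add_mul_exp_neg_nonneg (z ^ 2)]
  rw [integral_Ioi_of_hasDerivAt_of_nonneg continuousWithinAt_quarticPrimitive_zero
    (fun x hx => hasDerivAt_quarticPrimitive (ne_of_gt hx)) (fun x _ => hnonneg x)
    tendsto_quarticPrimitive_atTop]
  simp

theorem integral_one_sub_exp_sub_sq_exp_div_quartic :
    ∫ z : ℝ, (1 - Real.exp (-z ^ 2) - z ^ 2 * Real.exp (-z ^ 2)) / z ^ 4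
      = (2 / 3) * Real.sqrt π := by
  have heven := integral_comp_abs
    (f := fun z => (1 - exp (-z ^ 2) - z ^ 2 * exp (-z ^ 2)) / z ^ 4)
  simp only [sq_abs, Even.pow_abs (by decide : Even 4)] at heven
  rw [heven, integral_Ioi_one_sub_exp_sub_sq_exp_div_quartic]
  ring
end

section
/- For every x > 0, the function g(x) = ∫_{-∞}^{∞} (1 - e^{-x z²} - x z² e^{-x z²})/z⁴ dz is well-defined, satisfies g(x) → 0 as x → 0⁺, and g'(x) = ∫_{-∞}^{∞} x e^{-x z²} dz = √(π x); consequently g(1) = (2/3)√π. -/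
/-!
For `z ≠ 0` the integrand of `g` is `∫₀ˣ s e^{-s z²} ds`, and `∫ s e^{-s z²} dz = √(π s)` is the
Gaussian integral, so Fubini gives `g x = ∫₀ˣ √(π s) ds`. The derivative, the limit at `0⁺` and
`g 1 = ∫₀¹ √(π s) ds = (2/3)√π` are then read off this primitive.
-/

open Real MeasureTheory Filter Topology

noncomputable def gIntegrand (x z : ℝ) : ℝ :=
  (1 - exp (-x * z ^ 2) - x * z ^ 2 * exp (-x * z ^ 2)) / z ^ 4

lemma hasDerivAt_gIntegrand {z : ℝ} (hz : z ≠ 0) (s : ℝ) :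
    HasDerivAt (fun x => gIntegrand x z) (s * exp (-s * z ^ 2)) s := by
  have hexp : HasDerivAt (fun s : ℝ => exp (-s * z ^ 2)) (exp (-s * z ^ 2) * -z ^ 2) s := by
    simpa using ((hasDerivAt_id s).neg.mul_const (z ^ 2)).exp
  have hlin : HasDerivAt (fun s : ℝ => s * z ^ 2) (z ^ 2) s := by
    simpa using (hasDerivAt_id s).mul_const (z ^ 2)
  refine ((((hasDerivAt_const s 1).sub hexp).sub (hlin.mul hexp)).div_const (z ^ 4)).congr_deriv ?_
  field_simp
  ring

lemma gIntegrand_eq_intervalIntegral {z : ℝ} (hz : z ≠ 0) (x : ℝ) :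
    gIntegrand x z = ∫ s in (0 : ℝ)..x, s * exp (-s * z ^ 2) := by
  rw [intervalIntegral.integral_eq_sub_of_hasDerivAt (fun s _ => hasDerivAt_gIntegrand hz s)
    (Continuous.intervalIntegrable (by fun_prop) _ _)]
  simp [gIntegrand]

-- For `s < 0` both sides are junk `0`s: `∫` of a non-integrable function and `√` of a negative.
lemma integral_mul_exp_neg_mul_sq (s : ℝ) :
    ∫ z : ℝ, s * exp (-s * z ^ 2) = √(π * s) := by
  rw [integral_const_mul, integral_gaussian, sqrt_div pi_pos.le, sqrt_mul pi_pos.le,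
    mul_div_left_comm, div_sqrt]

lemma integrable_mul_exp_neg_mul_sq_prod (x : ℝ) :
    Integrable (fun p : ℝ × ℝ => p.1 * exp (-p.1 * p.2 ^ 2))
      ((volume.restrict (Set.Ioc 0 x)).prod volume) := by
  rw [integrable_prod_iff (Continuous.aestronglyMeasurable (by fun_prop))]
  constructor
  · filter_upwards [ae_restrict_mem measurableSet_Ioc] with s hs
    exact (integrable_exp_neg_mul_sq hs.1).const_mul s
  · refine (continuous_sqrt.comp (continuous_const_mul π)).integrableOn_Ioc.congr ?_
    filter_upwards [ae_restrict_mem measurableSet_Ioc] with s hs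
    rw [Function.comp_apply, ← integral_mul_exp_neg_mul_sq s]
    congr 1 with z
    rw [Real.norm_of_nonneg (mul_nonneg hs.1.le (exp_pos _).le)]

lemma gIntegrand_ae_eq_setIntegral {x : ℝ} (hx : 0 ≤ x) :
    (fun z => ∫ s in Set.Ioc 0 x, s * exp (-s * z ^ 2)) =ᵐ[volume] gIntegrand x := by
  filter_upwards [compl_mem_ae_iff.mpr (measure_singleton (0 : ℝ))] with z hz
  rw [gIntegrand_eq_intervalIntegral hz, intervalIntegral.integral_of_le hx]

lemma integrable_gIntegrand {x : ℝ} (hx : 0 ≤ x) : Integrable (gIntegrand x) :=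
  (integrable_mul_exp_neg_mul_sq_prod x).integral_prod_right.congr
    (gIntegrand_ae_eq_setIntegral hx)

lemma integral_gIntegrand {x : ℝ} (hx : 0 ≤ x) :
    ∫ z, gIntegrand x z = ∫ s in (0 : ℝ)..x, √(π * s) := by
  rw [← integral_congr_ae (gIntegrand_ae_eq_setIntegral hx),
    ← integral_integral_swap (integrable_mul_exp_neg_mul_sq_prod x),
    intervalIntegral.integral_of_le hx]
  simp_rw [integral_mul_exp_neg_mul_sq]

lemma intervalIntegral_sqrt {b : ℝ} (hb : 0 ≤ b) : ∫ s in (0 : ℝ)..b, √s = 2 / 3 * b * √b := by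
  have hrpow : ∫ s in (0 : ℝ)..b, √s = ∫ s in (0 : ℝ)..b, s ^ (1 / 2 : ℝ) :=
    intervalIntegral.integral_congr fun s _ => sqrt_eq_rpow s
  rw [hrpow, integral_rpow (Or.inl (by norm_num)), rpow_add' hb (by norm_num), rpow_one,
    ← sqrt_eq_rpow, zero_rpow (by norm_num)]
  ring

theorem g_integral_family :
    let g : ℝ → ℝ := fun x =>
      ∫ z : ℝ, (1 - Real.exp (-x * z ^ 2) - x * z ^ 2 * Real.exp (-x * z ^ 2)) / z ^ 4
    (∀ x > (0 : ℝ), Integrable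
      (fun z : ℝ => (1 - Real.exp (-x * z ^ 2) - x * z ^ 2 * Real.exp (-x * z ^ 2)) / z ^ 4)) ∧
    Tendsto g (𝓝[>] 0) (𝓝 0) ∧
    (∀ x > (0 : ℝ),
      (∫ z : ℝ, x * Real.exp (-x * z ^ 2)) = Real.sqrt (π * x) ∧
      HasDerivAt g (Real.sqrt (π * x)) x) ∧
    g 1 = (2 / 3) * Real.sqrt π := by
  intro g
  set G : ℝ → ℝ := fun x => ∫ s in (0 : ℝ)..x, √(π * s)
  have hg : ∀ x, 0 ≤ x → g x = G x := fun x hx => integral_gIntegrand hx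
  have hcont : Continuous fun s : ℝ => √(π * s) := by fun_prop
  have hG : ∀ x, HasDerivAt G (√(π * x)) x := fun x =>
    intervalIntegral.integral_hasDerivAt_right (hcont.intervalIntegrable _ _)
      (hcont.stronglyMeasurableAtFilter _ _) hcont.continuousAt
  refine ⟨fun x hx => integrable_gIntegrand hx.le, ?_, fun x hx => ⟨?_, ?_⟩, ?_⟩
  · have hG0 : Tendsto G (𝓝 0) (𝓝 0) := by
      simpa [G] using (hG 0).continuousAt.tendsto
    refine (hG0.mono_left nhdsWithin_le_nhds).congr' ?_
    filter_upwards [self_mem_nhdsWithin] with x hx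
    exact (hg x (le_of_lt hx)).symm
  · exact integral_mul_exp_neg_mul_sq x
  · refine (hG x).congr_of_eventuallyEq ?_
    filter_upwards [Ioi_mem_nhds hx] with y hy
    exact hg y hy.le
  · simp_rw [hg 1 zero_le_one, G, sqrt_mul pi_pos.le, intervalIntegral.integral_const_mul,
      intervalIntegral_sqrt zero_le_one]
    norm_num [mul_comm]
end

section
/- For ε > 0, ∫_{t-ε}^{t} ∫_{-∞}^{∞} s² (1 - e^{-λ} - λ e^{-λ})/(λ²(t-τ)²) ds dτ = 16√(πε), where λ = s²/(4(t-τ)). -/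
/-!
With `λ = s² / (4a)` and `b = 1 / (4a)` the inner integrand equals
`16 (1 - (1 + b s²) e^{-b s²}) / s²`. On `(0, ∞)` this function is the derivative of
`b ∫₀ˣ e^{-b u²} du - (1 - e^{-b x²}) / x`, which tends to `0` at `0⁺` and to `√(π b) / 2` at `∞`;
by evenness the inner integral is `16 √(π b) = 8 √π a^{-1/2}`, and integrating `a^{-1/2}` over
`(0, ε)` gives `16 √(π ε)`.
-/

open Real MeasureTheory intervalIntegral

open Set Filter Topology

lemma one_add_mul_exp_neg_le_one (x : ℝ) : (1 + x) * exp (-x) ≤ 1 := by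
  calc (1 + x) * exp (-x) ≤ exp x * exp (-x) := by
        gcongr; linarith [add_one_le_exp x]
    _ = 1 := by rw [← exp_add, add_neg_cancel, exp_zero]

lemma tendsto_one_sub_exp_neg_mul_sq_div_nhdsNE (b : ℝ) :
    Tendsto (fun x => (1 - exp (-b * x ^ 2)) / x) (𝓝[≠] 0) (𝓝 0) := by
  have hderiv : HasDerivAt (fun x => 1 - exp (-b * x ^ 2)) 0 0 := by
    simpa using ((hasDerivAt_pow 2 (0 : ℝ)).const_mul (-b)).exp.const_sub 1
  refine (hasDerivAt_iff_tendsto_slope.mp hderiv).congr fun x => ?_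
  simp [slope_def_field]

lemma tendsto_one_sub_exp_neg_mul_sq_div_atTop {b : ℝ} (hb : 0 < b) :
    Tendsto (fun x => (1 - exp (-b * x ^ 2)) / x) atTop (𝓝 0) := by
  have hexp : Tendsto (fun x : ℝ => exp (-b * x ^ 2)) atTop (𝓝 0) := by
    refine tendsto_exp_atBot.comp ?_
    simpa using (tendsto_pow_atTop two_ne_zero).const_mul_atTop hb
  simpa using (tendsto_const_nhds.sub hexp).div_atTop tendsto_id

/-- A primitive of `x ↦ (1 - (1 + b x²) e^{-b x²}) / x²` on `x ≠ 0`. -/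
noncomputable def gaussianDefectPrimitive (b y : ℝ) : ℝ :=
  b * (∫ u in (0 : ℝ)..y, exp (-b * u ^ 2)) - (1 - exp (-b * y ^ 2)) / y

lemma hasDerivAt_gaussianDefectPrimitive (b : ℝ) {x : ℝ} (hx : x ≠ 0) :
    HasDerivAt (gaussianDefectPrimitive b)
      ((1 - (1 + b * x ^ 2) * exp (-b * x ^ 2)) / x ^ 2) x := by
  have hcont : Continuous fun u : ℝ => exp (-b * u ^ 2) := by fun_prop
  have hgauss := (hcont.integral_hasStrictDerivAt 0 x).hasDerivAt.const_mul b
  have hquot :=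
    (((hasDerivAt_pow 2 x).const_mul (-b)).exp.const_sub 1).div (hasDerivAt_id x) hx
  refine (hgauss.sub hquot).congr_deriv ?_
  simp only [id]
  field_simp
  ring

lemma continuousAt_gaussianDefectPrimitive_zero (b : ℝ) :
    ContinuousAt (gaussianDefectPrimitive b) 0 := by
  have hcont : Continuous fun u : ℝ => exp (-b * u ^ 2) := by fun_prop
  have hgauss :=
    ((hcont.integral_hasStrictDerivAt 0 0).hasDerivAt.continuousAt.const_mul b).tendsto
  rw [← continuousWithinAt_compl_self, ContinuousWithinAt]
  unfold gaussianDefectPrimitive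
  simpa using (hgauss.mono_left nhdsWithin_le_nhds).sub
    (tendsto_one_sub_exp_neg_mul_sq_div_nhdsNE b)

lemma tendsto_gaussianDefectPrimitive_atTop {b : ℝ} (hb : 0 < b) :
    Tendsto (gaussianDefectPrimitive b) atTop (𝓝 (√(π * b) / 2)) := by
  have hgauss := (intervalIntegral_tendsto_integral_Ioi 0
    (integrable_exp_neg_mul_sq hb).integrableOn tendsto_id).const_mul b
  rw [integral_gaussian_Ioi] at hgauss
  convert hgauss.sub (tendsto_one_sub_exp_neg_mul_sq_div_atTop hb) using 1
  · rfl
  · rw [sqrt_div' _ hb.le, sqrt_mul' _ hb.le, sub_zero]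
    congr 1
    field_simp
    exact sq_sqrt hb.le

lemma integral_Ioi_one_sub_one_add_mul_sq_mul_exp_neg_mul_sq_div_sq {b : ℝ} (hb : 0 < b) :
    ∫ x in Ioi (0 : ℝ), (1 - (1 + b * x ^ 2) * exp (-b * x ^ 2)) / x ^ 2 = √(π * b) / 2 := by
  have hnonneg (x : ℝ) : 0 ≤ (1 - (1 + b * x ^ 2) * exp (-b * x ^ 2)) / x ^ 2 := by
    refine div_nonneg (sub_nonneg.2 ?_) (sq_nonneg x)
    simpa using one_add_mul_exp_neg_le_one (b * x ^ 2)
  rw [integral_Ioi_of_hasDerivAt_of_nonneg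
    (continuousAt_gaussianDefectPrimitive_zero b).continuousWithinAt
    (fun x hx => hasDerivAt_gaussianDefectPrimitive b (ne_of_gt hx)) (fun x _ => hnonneg x)
    (tendsto_gaussianDefectPrimitive_atTop hb)]
  simp [gaussianDefectPrimitive]

lemma integral_one_sub_one_add_mul_sq_mul_exp_neg_mul_sq_div_sq {b : ℝ} (hb : 0 < b) :
    ∫ x, (1 - (1 + b * x ^ 2) * exp (-b * x ^ 2)) / x ^ 2 = √(π * b) := by
  have := integral_comp_abs (f := fun x => (1 - (1 + b * x ^ 2) * exp (-b * x ^ 2)) / x ^ 2)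
  simp only [sq_abs] at this
  rw [this, integral_Ioi_one_sub_one_add_mul_sq_mul_exp_neg_mul_sq_div_sq hb]
  ring

lemma integral_s_sq_kernel {a : ℝ} (ha : 0 < a) :
    ∫ s : ℝ, s ^ 2 * (1 - exp (-(s ^ 2 / (4 * a)))
        - (s ^ 2 / (4 * a)) * exp (-(s ^ 2 / (4 * a)))) / ((s ^ 2 / (4 * a)) ^ 2 * a ^ 2)
      = 8 * √π * a ^ (-(1 / 2) : ℝ) := by
  have hpoint (s : ℝ) : s ^ 2 * (1 - exp (-(s ^ 2 / (4 * a)))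
        - (s ^ 2 / (4 * a)) * exp (-(s ^ 2 / (4 * a)))) / ((s ^ 2 / (4 * a)) ^ 2 * a ^ 2)
      = 16 * ((1 - (1 + (4 * a)⁻¹ * s ^ 2) * exp (-(4 * a)⁻¹ * s ^ 2)) / s ^ 2) := by
    rcases eq_or_ne s 0 with rfl | hs
    · simp
    · rw [neg_mul, ← div_eq_inv_mul]
      field_simp
      ring
  have hsqrt4 : √(4 : ℝ) = 2 := by rw [show (4 : ℝ) = 2 ^ 2 by norm_num, sqrt_sq zero_le_two]
  simp_rw [hpoint]
  rw [MeasureTheory.integral_const_mul,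
    integral_one_sub_one_add_mul_sq_mul_exp_neg_mul_sq_div_sq (by positivity),
    rpow_neg ha.le, ← sqrt_eq_rpow, sqrt_mul pi_pos.le, sqrt_inv, sqrt_mul zero_le_four, hsqrt4]
  ring

theorem double_integral_s_sq_kernel (t ε : ℝ) (hε : 0 < ε) :
    ∫ τ in (t - ε)..t, ∫ s : ℝ,
        s ^ 2 * (1 - Real.exp (-(s ^ 2 / (4 * (t - τ))))
          - (s ^ 2 / (4 * (t - τ))) * Real.exp (-(s ^ 2 / (4 * (t - τ)))))
          / ((s ^ 2 / (4 * (t - τ))) ^ 2 * (t - τ) ^ 2)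
      = 16 * Real.sqrt (π * ε) := by
  rw [integral_comp_sub_left (fun a => ∫ s : ℝ, s ^ 2 * (1 - exp (-(s ^ 2 / (4 * a)))
      - (s ^ 2 / (4 * a)) * exp (-(s ^ 2 / (4 * a)))) / ((s ^ 2 / (4 * a)) ^ 2 * a ^ 2)) t,
    sub_self, sub_sub_cancel,
    intervalIntegral.integral_congr_ae (g := fun a => 8 * √π * a ^ (-(1 / 2) : ℝ))
      (ae_of_all _ fun a ha => integral_s_sq_kernel (uIoc_of_le hε.le ▸ ha).1),
    intervalIntegral.integral_const_mul, integral_rpow (by norm_num),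
    show (-(1 / 2) : ℝ) + 1 = 1 / 2 by norm_num, zero_rpow (by norm_num), ← sqrt_eq_rpow,
    sqrt_mul pi_pos.le]
  ring
end

section
/- For ε > 0, ∫_{t-ε}^{t} ∫_{-∞}^{∞} (t-τ)(1 - e^{-λ} - λ e^{-λ})/(λ²(t-τ)²) ds dτ = (8/3)√(πε), where λ = s²/(4(t-τ)). -/
open Real MeasureTheory intervalIntegral Set Filter Topology

/-! With `h z = (1 - e^{-z²} - z² e^{-z²}) / z⁴`, the substitution `z = s / (2√(t - τ))` turns the
inner integral into `(t - τ)^{-1/2} ∫ h` up to a factor `2`. Since `(z h z)' = 2 e^{-z²} - 3 h z`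
and `z h z` vanishes at `0` and at `∞`, `∫_ℝ h = (2/3) ∫_ℝ e^{-z²} = (2/3)√π`; finally
`∫_{t-ε}^t (t - τ)^{-1/2} dτ = 2√ε`. -/

noncomputable def kernelProfile (z : ℝ) : ℝ :=
  (1 - exp (-z ^ 2) - z ^ 2 * exp (-z ^ 2)) / z ^ 4

lemma one_sub_exp_neg_sub_mul_exp_neg_nonneg (u : ℝ) : 0 ≤ 1 - exp (-u) - u * exp (-u) := by
  have h := mul_le_mul_of_nonneg_right (add_one_le_exp u) (exp_pos (-u)).le
  rw [← exp_add, add_neg_cancel, exp_zero] at h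
  linarith

lemma one_sub_exp_neg_sub_mul_exp_neg_le_one {u : ℝ} (hu : -1 ≤ u) :
    1 - exp (-u) - u * exp (-u) ≤ 1 := by
  nlinarith [exp_pos (-u)]

lemma one_sub_exp_neg_sub_mul_exp_neg_le_sq {u : ℝ} (hu : 0 ≤ u) :
    1 - exp (-u) - u * exp (-u) ≤ u ^ 2 := by
  have h := mul_le_mul_of_nonneg_right (by simpa using add_one_le_exp (-u))
    (by linarith : (0 : ℝ) ≤ 1 + u)
  nlinarith

lemma one_sub_exp_neg_sub_mul_exp_neg_mul_one_add_le {u : ℝ} (hu : 0 ≤ u) :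
    (1 - exp (-u) - u * exp (-u)) * (1 + u) ≤ 2 * u ^ 2 := by
  rcases le_total u 1 with hu1 | hu1
  · nlinarith [one_sub_exp_neg_sub_mul_exp_neg_le_sq hu]
  · nlinarith [one_sub_exp_neg_sub_mul_exp_neg_le_one (by linarith : -1 ≤ u)]

lemma kernelProfile_nonneg (z : ℝ) : 0 ≤ kernelProfile z :=
  div_nonneg (one_sub_exp_neg_sub_mul_exp_neg_nonneg _) (by positivity)

lemma kernelProfile_le (z : ℝ) : kernelProfile z ≤ 2 * (1 + z ^ 2)⁻¹ := by
  rcases eq_or_ne z 0 with rfl | hz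
  · simp [kernelProfile]
  · rw [kernelProfile, ← div_eq_mul_inv, div_le_div_iff₀ (by positivity) (by positivity)]
    have := one_sub_exp_neg_sub_mul_exp_neg_mul_one_add_le (sq_nonneg z)
    linarith [show (z ^ 2) ^ 2 = z ^ 4 by ring]

lemma kernelProfile_abs (z : ℝ) : kernelProfile |z| = kernelProfile z := by
  simp only [kernelProfile, sq_abs, (by decide : Even 4).pow_abs]

lemma integrable_kernelProfile : Integrable kernelProfile :=
  (integrable_inv_one_add_sq.const_mul 2).mono'
    (Measurable.div (by fun_prop) (by fun_prop)).aestronglyMeasurable <| ae_of_all _ fun z => by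
      rw [norm_of_nonneg (kernelProfile_nonneg z)]; exact kernelProfile_le z

lemma hasDerivAt_mul_kernelProfile {z : ℝ} (hz : z ≠ 0) :
    HasDerivAt (fun z => z * kernelProfile z) (2 * exp (-z ^ 2) - 3 * kernelProfile z) z := by
  have he : HasDerivAt (fun z : ℝ => exp (-z ^ 2)) (exp (-z ^ 2) * -(2 * z)) z := by
    simpa using ((hasDerivAt_pow 2 z).neg).exp
  have h := (hasDerivAt_id z).mul ((((hasDerivAt_const z (1 : ℝ)).sub he).sub
    ((hasDerivAt_pow 2 z).mul he)).div (hasDerivAt_pow 4 z) (by positivity))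
  refine h.congr_deriv ?_
  simp only [kernelProfile, id, Pi.sub_apply, Pi.mul_apply, Pi.div_apply]
  field_simp
  ring

lemma tendsto_mul_kernelProfile_nhds_zero :
    Tendsto (fun z => z * kernelProfile z) (𝓝 0) (𝓝 0) := by
  refine squeeze_zero_norm (a := fun z => 2 * |z|) (fun z => ?_) ?_
  · rw [norm_mul, norm_of_nonneg (kernelProfile_nonneg z), Real.norm_eq_abs, mul_comm]
    refine mul_le_mul_of_nonneg_right ((kernelProfile_le z).trans ?_) (abs_nonneg z)
    exact mul_le_of_le_one_right zero_le_two (inv_le_one_of_one_le₀ (by nlinarith))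
  · simpa using ((continuous_abs.const_mul 2).tendsto (0 : ℝ))

lemma tendsto_mul_kernelProfile_atTop :
    Tendsto (fun z => z * kernelProfile z) atTop (𝓝 0) := by
  refine squeeze_zero_norm' (a := fun z => 2 * z⁻¹) ?_
    (by simpa using tendsto_inv_atTop_zero.const_mul (2 : ℝ))
  filter_upwards [eventually_gt_atTop 0] with z hz
  rw [norm_mul, norm_of_nonneg (kernelProfile_nonneg z), norm_of_nonneg hz.le]
  calc z * kernelProfile z ≤ z * (2 * (1 + z ^ 2)⁻¹) :=
        mul_le_mul_of_nonneg_left (kernelProfile_le z) hz.le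
    _ ≤ 2 * z⁻¹ := by
        rw [← div_eq_mul_inv, ← div_eq_mul_inv, mul_div_assoc', div_le_div_iff₀ (by positivity) hz]
        nlinarith

lemma integral_Ioi_kernelProfile : ∫ z in Ioi (0 : ℝ), kernelProfile z = √π / 3 := by
  have hgauss : IntegrableOn (fun z : ℝ => 2 * exp (-z ^ 2)) (Ioi 0) := by
    simpa using ((integrable_exp_neg_mul_sq one_pos).const_mul 2).integrableOn
  have hhalf : ∫ z in Ioi (0 : ℝ), exp (-z ^ 2) = √π / 2 := by
    simpa using integral_gaussian_Ioi 1
  have hftc := integral_Ioi_of_hasDerivAt_of_tendsto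
    (tendsto_nhdsWithin_of_tendsto_nhds (by simpa using tendsto_mul_kernelProfile_nhds_zero))
    (fun z hz => hasDerivAt_mul_kernelProfile (ne_of_gt hz))
    (hgauss.sub (integrable_kernelProfile.integrableOn.const_mul 3))
    tendsto_mul_kernelProfile_atTop
  rw [integral_sub hgauss (integrable_kernelProfile.integrableOn.const_mul 3),
    MeasureTheory.integral_const_mul, MeasureTheory.integral_const_mul, hhalf] at hftc
  linarith

lemma integral_kernelProfile : ∫ z, kernelProfile z = 2 / 3 * √π := by
  rw [← integral_congr_ae (ae_of_all _ kernelProfile_abs), integral_comp_abs,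
    integral_Ioi_kernelProfile]
  ring

lemma integral_kernel_at_time {a : ℝ} (ha : 0 < a) :
    ∫ s : ℝ, a * (1 - exp (-(s ^ 2 / (4 * a))) - (s ^ 2 / (4 * a)) * exp (-(s ^ 2 / (4 * a))))
        / ((s ^ 2 / (4 * a)) ^ 2 * a ^ 2)
      = 4 / 3 * √π / √a := by
  have hsq : √a ^ 2 = a := sq_sqrt ha.le
  have hscale : ∀ s : ℝ, s ^ 2 / (4 * a) = ((2 * √a)⁻¹ * s) ^ 2 := fun s => by
    rw [mul_pow, inv_pow, mul_pow, hsq]; field_simp; norm_num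
  have hprofile : ∀ s : ℝ, a * (1 - exp (-(s ^ 2 / (4 * a)))
      - (s ^ 2 / (4 * a)) * exp (-(s ^ 2 / (4 * a)))) / ((s ^ 2 / (4 * a)) ^ 2 * a ^ 2)
      = a⁻¹ * kernelProfile ((2 * √a)⁻¹ * s) := fun s => by
    rw [hscale s, kernelProfile]
    rcases eq_or_ne ((2 * √a)⁻¹ * s) 0 with hz | hz
    · rw [hz]; simp
    · field_simp
  simp_rw [hprofile]
  rw [MeasureTheory.integral_const_mul, Measure.integral_comp_mul_left, smul_eq_mul,
    integral_kernelProfile, inv_inv, abs_of_pos (by positivity)]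
  field_simp
  rw [hsq]
  ring

lemma integral_inv_sqrt {ε : ℝ} (hε : 0 ≤ ε) : ∫ u in (0 : ℝ)..ε, (√u)⁻¹ = 2 * √ε := by
  have hrpow : ∫ u in (0 : ℝ)..ε, (√u)⁻¹ = ∫ u in (0 : ℝ)..ε, u ^ (-(1 / 2) : ℝ) :=
    integral_congr fun u hu => by
      rw [uIcc_of_le hε] at hu
      simp only [rpow_neg hu.1, sqrt_eq_rpow]
  rw [hrpow, integral_rpow (Or.inl (by norm_num)), zero_rpow (by norm_num), sqrt_eq_rpow]
  norm_num
  ring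

theorem double_integral_kernel (t ε : ℝ) (hε : 0 < ε) :
    ∫ τ in (t - ε)..t, ∫ s : ℝ,
        (t - τ) * (1 - Real.exp (-(s ^ 2 / (4 * (t - τ))))
          - (s ^ 2 / (4 * (t - τ))) * Real.exp (-(s ^ 2 / (4 * (t - τ)))))
          / ((s ^ 2 / (4 * (t - τ))) ^ 2 * (t - τ) ^ 2)
      = (8 / 3) * Real.sqrt (π * ε) := by
  rw [integral_congr (g := fun τ => 4 / 3 * √π * (√(t - τ))⁻¹) fun τ hτ => ?_]
  · rw [intervalIntegral.integral_const_mul, integral_comp_sub_left (fun u => (√u)⁻¹), sub_self,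
      sub_sub_cancel, integral_inv_sqrt hε.le, sqrt_mul pi_pos.le]
    ring
  rw [uIcc_of_le (by linarith)] at hτ
  rcases hτ.2.lt_or_eq with hτt | rfl
  · exact (integral_kernel_at_time (sub_pos.mpr hτt)).trans (div_eq_mul_inv _ _)
  · simp
end
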